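/- Given a three-valued interpretation ⟨D,v⟩ over {0, 1/2, 1}, define the Clemens interpretation ⟨D,v'⟩ over 2^n by mapping 1 ↦ ⟨1,…,1,1⟩, 1/2 ↦ ⟨1,…,1,0⟩, and 0 ↦ ⟨0,…,0,0⟩. Then for every sentence A: (a) the Clemens value of A is ⟨1,…,1⟩ iff the three-valued value is 1, and (b) the Clemens value of A is ⟨0,…,0⟩ iff the three-valued value is 0. -/

import Mathlib

/-- Helper instance so that instance search for the lexicographic order does not get stuck. -/
instance (n : ℕ) : WellFoundedLT (Fin n) := inferInstance

/-- `2^n`: the `n`-fold product of the two-element Boolean algebra `2 = {0,1}` (as `Bool`,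
with `false = 0`, `true = 1`), carrying the lexicographic order. -/
abbrev Tup (n : ℕ) := Lex (Fin n → Bool)

/-- The componentwise complement `-⟨x₁,…,xₙ⟩ = ⟨1-x₁,…,1-xₙ⟩` on `2^n`. -/
def tneg {n : ℕ} (x : Tup n) : Tup n := toLex fun i => !(ofLex x i)

/-- The top value `⟨1,…,1⟩` of `2^n`. -/
def tTop (n : ℕ) : Tup n := toLex fun _ => true

/-- The bottom value `⟨0,…,0⟩` of `2^n`. -/
def tBot (n : ℕ) : Tup n := toLex fun _ => false

/-- The three truth values `f < i < t` (i.e. `0 < 1/2 < 1`). -/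
inductive V3 where
  | f | i | t
deriving DecidableEq

instance : Fintype V3 :=
  Fintype.ofList [V3.f, V3.i, V3.t] (fun x => by cases x <;> decide)

def V3.toFin : V3 → Fin 3
  | .f => 0 | .i => 1 | .t => 2

instance : LinearOrder V3 := LinearOrder.lift' V3.toFin (by decide)

/-- Three-valued negation: `1 - x`. -/
def V3.negv : V3 → V3
  | .t => .f | .i => .i | .f => .t

/-- The map `g : {0,1/2,1} → 2^n` sending `1 ↦ ⟨1,…,1,1⟩`, `1/2 ↦ ⟨1,…,1,0⟩`,
`0 ↦ ⟨0,…,0,0⟩`. -/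
def gmap (n : ℕ) : V3 → Tup n
  | .t => tTop n
  | .i => toLex fun i => decide ((i : ℕ) < n - 1)
  | .f => tBot n

instance (n : ℕ) : Fintype (Tup n) := Fintype.ofEquiv _ toLex
instance (n : ℕ) : Nonempty (Tup n) := ⟨tBot n⟩
noncomputable instance (n : ℕ) : CompleteLinearOrder (Tup n) :=
  Fintype.toCompleteLinearOrder _
instance : Nonempty V3 := ⟨V3.t⟩
noncomputable instance : CompleteLinearOrder V3 :=
  Fintype.toCompleteLinearOrderOfNonempty _

/-- Terms of a first-order language: variables and constant symbols. -/
inductive Term (Const : Type) where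
  | var : ℕ → Term Const
  | const : Const → Term Const

/-- First-order formulas over predicate symbols `Pred` (with arities `ar`),
constants `Const`, and the connectives `¬, ∧, ∨, ∀, ∃`. -/
inductive FForm (Pred Const : Type) (ar : Pred → ℕ) where
  | atom : (P : Pred) → (Fin (ar P) → Term Const) → FForm Pred Const ar
  | neg : FForm Pred Const ar → FForm Pred Const ar
  | conj : FForm Pred Const ar → FForm Pred Const ar → FForm Pred Const ar
  | disj : FForm Pred Const ar → FForm Pred Const ar → FForm Pred Const ar
  | all : ℕ → FForm Pred Const ar → FForm Pred Const ar
  | ex : ℕ → FForm Pred Const ar → FForm Pred Const ar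

/-- Evaluation of terms, given interpretations of the constants and an assignment. -/
def Term.evalt {Const D : Type} (cv : Const → D) (σ : ℕ → D) : Term Const → D
  | .var x => σ x
  | .const c => cv c

/-- The Clemens valuation over `2^n`: componentwise complement for `¬`, lexicographic
min/max for `∧`/`∨`, and inf/sup over the domain for the quantifiers. -/
noncomputable def fevalT {Pred Const : Type} {ar : Pred → ℕ} {n : ℕ} {D : Type}
    (cv : Const → D) (pv : (P : Pred) → (Fin (ar P) → D) → Tup n) (σ : ℕ → D) :
    FForm Pred Const ar → Tup n
  | .atom P ts => pv P fun j => (ts j).evalt cv σ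
  | .neg A => tneg (fevalT cv pv σ A)
  | .conj A B => min (fevalT cv pv σ A) (fevalT cv pv σ B)
  | .disj A B => max (fevalT cv pv σ A) (fevalT cv pv σ B)
  | .all x A => ⨅ d : D, fevalT cv pv (Function.update σ x d) A
  | .ex x A => ⨆ d : D, fevalT cv pv (Function.update σ x d) A

/-- The three-valued (strong Kleene / LP) valuation over `{0, 1/2, 1}`: `1 - x` for `¬`,
min/max for `∧`/`∨`, and inf/sup over the domain for the quantifiers. -/
noncomputable def feval3 {Pred Const : Type} {ar : Pred → ℕ} {D : Type}
    (cv : Const → D) (pv : (P : Pred) → (Fin (ar P) → D) → V3) (σ : ℕ → D) :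
    FForm Pred Const ar → V3
  | .atom P ts => pv P fun j => (ts j).evalt cv σ
  | .neg A => (feval3 cv pv σ A).negv
  | .conj A B => min (feval3 cv pv σ A) (feval3 cv pv σ B)
  | .disj A B => max (feval3 cv pv σ A) (feval3 cv pv σ B)
  | .all x A => ⨅ d : D, feval3 cv pv (Function.update σ x d) A
  | .ex x A => ⨆ d : D, feval3 cv pv (Function.update σ x d) A


/-! Both valuations are compared only through which values are extreme. In any linear order a
`min` is top iff both arguments are and bottom iff one is (dually for `max`), complement swaps
top and bottom in both algebras, and in a finite linear order an infimum over a nonempty domain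
is bottom iff some value is and top iff all are (dually for suprema). So being top or bottom
propagates through every formula in the same way in both semantics, and it remains to check
the atoms: `g` sends `1` and `0` to the extremes of `2^n`, and `1/2` to `⟨1,…,1,0⟩`, which is
neither extreme once `n ≥ 2`. -/

section SameExtremes

variable {α β : Type*}

theorem iInf_eq_bot_iff_of_wellFoundedLT {ι : Sort*} [Nonempty ι] [CompleteLinearOrder α]
    [WellFoundedLT α] {f : ι → α} : ⨅ i, f i = ⊥ ↔ ∃ i, f i = ⊥ :=
  ⟨fun h => (ciInf_mem f).imp fun _ hi => hi.trans h,
    fun ⟨i, hi⟩ => le_bot_iff.1 (hi ▸ iInf_le f i)⟩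

theorem iSup_eq_top_iff_of_wellFoundedGT {ι : Sort*} [Nonempty ι] [CompleteLinearOrder α]
    [WellFoundedGT α] {f : ι → α} : ⨆ i, f i = ⊤ ↔ ∃ i, f i = ⊤ :=
  iInf_eq_bot_iff_of_wellFoundedLT (α := αᵒᵈ)

def SameExtremes [LE α] [LE β] (a : α) (b : β) : Prop :=
  (IsTop a ↔ IsTop b) ∧ (IsBot a ↔ IsBot b)

namespace SameExtremes

section LinearOrder

variable [LinearOrder α] [BoundedOrder α] [LinearOrder β] [BoundedOrder β] {a a' : α} {b b' : β}

theorem min (h : SameExtremes a b) (h' : SameExtremes a' b') :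
    SameExtremes (min a a') (min b b') := by
  simp only [SameExtremes, isTop_iff_eq_top, isBot_iff_eq_bot, min_eq_top, min_eq_bot] at *
  rw [h.1, h.2, h'.1, h'.2]
  exact ⟨Iff.rfl, Iff.rfl⟩

theorem max (h : SameExtremes a b) (h' : SameExtremes a' b') :
    SameExtremes (max a a') (max b b') := by
  simp only [SameExtremes, isTop_iff_eq_top, isBot_iff_eq_bot, max_eq_top, max_eq_bot] at *
  rw [h.1, h.2, h'.1, h'.2]
  exact ⟨Iff.rfl, Iff.rfl⟩

end LinearOrder

variable {ι : Sort*} [Nonempty ι] [CompleteLinearOrder α] [CompleteLinearOrder β]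
  {f : ι → α} {g : ι → β}

theorem iInf [WellFoundedLT α] [WellFoundedLT β] (h : ∀ i, SameExtremes (f i) (g i)) :
    SameExtremes (⨅ i, f i) (⨅ i, g i) := by
  simp only [SameExtremes, isTop_iff_eq_top, isBot_iff_eq_bot] at *
  simp only [iInf_eq_top, iInf_eq_bot_iff_of_wellFoundedLT, fun i => (h i).1, fun i => (h i).2,
    and_self]

theorem iSup [WellFoundedGT α] [WellFoundedGT β] (h : ∀ i, SameExtremes (f i) (g i)) :
    SameExtremes (⨆ i, f i) (⨆ i, g i) := by
  simp only [SameExtremes, isTop_iff_eq_top, isBot_iff_eq_bot] at *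
  simp only [iSup_eq_bot, iSup_eq_top_iff_of_wellFoundedGT, fun i => (h i).1, fun i => (h i).2,
    and_self]

end SameExtremes

end SameExtremes

theorem V3.t_eq_top : V3.t = ⊤ := top_le_iff.1 (by decide)

theorem V3.f_eq_bot : V3.f = ⊥ := le_bot_iff.1 (by decide)

theorem V3.isTop_negv_iff {a : V3} : IsTop a.negv ↔ IsBot a := by
  rw [isTop_iff_eq_top, isBot_iff_eq_bot, ← V3.t_eq_top, ← V3.f_eq_bot]
  cases a <;> decide

theorem V3.isBot_negv_iff {a : V3} : IsBot a.negv ↔ IsTop a := by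
  rw [isTop_iff_eq_top, isBot_iff_eq_bot, ← V3.t_eq_top, ← V3.f_eq_bot]
  cases a <;> decide

section Tup

variable {n : ℕ}

theorem tTop_eq_top : tTop n = ⊤ :=
  top_le_iff.1 (Pi.toLex_monotone fun _ => Bool.le_true _)

theorem tBot_eq_bot : tBot n = ⊥ :=
  le_bot_iff.1 (Pi.toLex_monotone fun _ => Bool.false_le _)

theorem tneg_tneg (x : Tup n) : tneg (tneg x) = x :=
  funext fun i => Bool.not_not (ofLex x i)

theorem tneg_injective : Function.Injective (@tneg n) :=
  Function.LeftInverse.injective tneg_tneg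

theorem isTop_tneg_iff {x : Tup n} : IsTop (tneg x) ↔ IsBot x := by
  rw [isTop_iff_eq_top, isBot_iff_eq_bot, ← tTop_eq_top, ← tBot_eq_bot]
  exact tneg_injective.eq_iff (b := tBot n)

theorem isBot_tneg_iff {x : Tup n} : IsBot (tneg x) ↔ IsTop x := by
  rw [isTop_iff_eq_top, isBot_iff_eq_bot, ← tTop_eq_top, ← tBot_eq_bot]
  exact tneg_injective.eq_iff (b := tTop n)

theorem isTop_gmap_iff (hn : 1 ≤ n) {a : V3} : IsTop (gmap n a) ↔ IsTop a := by
  rw [isTop_iff_eq_top, isTop_iff_eq_top, ← tTop_eq_top, ← V3.t_eq_top]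
  refine ⟨fun h => ?_, fun h => h ▸ rfl⟩
  have last := congrFun h ⟨n - 1, by omega⟩
  cases a <;> simp [gmap, tTop, tBot] at last ⊢

theorem isBot_gmap_iff (hn : 2 ≤ n) {a : V3} : IsBot (gmap n a) ↔ IsBot a := by
  rw [isBot_iff_eq_bot, isBot_iff_eq_bot, ← tBot_eq_bot, ← V3.f_eq_bot]
  refine ⟨fun h => ?_, fun h => h ▸ rfl⟩
  have first := congrFun h ⟨0, by omega⟩
  cases a <;> simp [gmap, tTop, tBot, show 0 < n - 1 by omega] at first ⊢

end Tup

namespace SameExtremes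

variable {n : ℕ}

theorem tneg_negv {x : Tup n} {a : V3} (h : SameExtremes x a) :
    SameExtremes (tneg x) a.negv := by
  rw [SameExtremes, isTop_tneg_iff, isBot_tneg_iff, V3.isTop_negv_iff, V3.isBot_negv_iff]
  exact h.symm

theorem gmap (hn : 2 ≤ n) (a : V3) : SameExtremes (gmap n a) a :=
  ⟨isTop_gmap_iff (by omega), isBot_gmap_iff hn⟩

end SameExtremes

/-- Lemma `3toc`: expanding a three-valued interpretation to a Clemens one
via `1 ↦ ⟨1,…,1,1⟩`, `1/2 ↦ ⟨1,…,1,0⟩`, `0 ↦ ⟨0,…,0,0⟩` preserves the extreme values: for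
every formula `A` (in particular every sentence) and assignment, (a) the Clemens value is
`⟨1,…,1⟩` iff the three-valued value is `1`, and (b) it is `⟨0,…,0⟩` iff the three-valued
value is `0`. -/
theorem threeValued_to_clemens (n : ℕ) (hn : 2 ≤ n) (Pred Const : Type) (ar : Pred → ℕ)
    (D : Type) [Nonempty D] (cv : Const → D)
    (pv : (P : Pred) → (Fin (ar P) → D) → V3)
    (A : FForm Pred Const ar) (σ : ℕ → D) :
    (fevalT cv (fun P as => gmap n (pv P as)) σ A = tTop n ↔
       feval3 cv pv σ A = V3.t) ∧
    (fevalT cv (fun P as => gmap n (pv P as)) σ A = tBot n ↔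
       feval3 cv pv σ A = V3.f) := by
  suffices h : SameExtremes (fevalT cv (fun P as => gmap n (pv P as)) σ A) (feval3 cv pv σ A) by
    simpa only [SameExtremes, isTop_iff_eq_top, isBot_iff_eq_bot, tTop_eq_top, tBot_eq_bot,
      V3.t_eq_top, V3.f_eq_bot] using h
  -- `fevalT` takes infima in Mathlib's lexicographic complete order on `Tup n`, not in the
  -- `Fintype`-derived instance above, whose infima are only propositionally equal to them.
  let : CompleteLinearOrder (Tup n) := Pi.Lex.instCompleteLinearOrderLexForall
  induction A generalizing σ with
  | atom P ts => exact .gmap hn _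
  | neg A ih => exact (ih σ).tneg_negv
  | conj A B ihA ihB => exact (ihA σ).min (ihB σ)
  | disj A B ihA ihB => exact (ihA σ).max (ihB σ)
  | all x A ih => rw [fevalT, feval3]; exact .iInf fun d => ih (Function.update σ x d)
  | ex x A ih => rw [fevalT, feval3]; exact .iSup fun d => ih (Function.update σ x d)
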